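/- arXiv:2510.20928 — 3 statements merged into one kernel-verified Lean document; each statement's English description precedes it below -/
import Mathlib

section
/- The conditional bias of the doubly robust influence function is a product of nuisance errors: for fixed measurable functions π̂ (with π̂ ≥ ε > 0) and μ̂, E[ R(Y − μ̂(X,W))/π̂(X,W) + μ̂(X,W) − μ(X,W) ] = E[ (π(X,W) − π̂(X,W))(μ(X,W) − μ̂(X,W)) / π̂(X,W) ]. -/
open MeasureTheory ProbabilityTheory


section Aux

variable {Ω : Type*} {m : MeasurableSpace Ω} [mΩ : MeasurableSpace Ω] [StandardBorelSpace Ω]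
  {μ : Measure Ω} [IsProbabilityMeasure μ]

/-- quantifier swap: conditional independence gives a.e. independence under the
conditional kernel. -/
lemma aux_ae_indepFun (hm : m ≤ mΩ) {R Y : Ω → ℝ} (hR : Measurable R) (hY : Measurable Y)
    (h : ProbabilityTheory.Kernel.IndepFun R Y (condExpKernel μ m) (μ.trim hm)) :
    ∀ᵐ ω ∂μ, IndepFun R Y (condExpKernel μ m ω) := by
  have h' : ∀ p q : ℚ, ∀ᵐ ω ∂(μ.trim hm),
      condExpKernel μ m ω (R ⁻¹' Set.Iic (p : ℝ) ∩ Y ⁻¹' Set.Iic (q : ℝ))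
        = condExpKernel μ m ω (R ⁻¹' Set.Iic (p : ℝ))
          * condExpKernel μ m ω (Y ⁻¹' Set.Iic (q : ℝ)) := fun p q =>
    h _ _ ⟨Set.Iic (p : ℝ), measurableSet_Iic, rfl⟩ ⟨Set.Iic (q : ℝ), measurableSet_Iic, rfl⟩
  have h2 : ∀ᵐ ω ∂(μ.trim hm), ∀ p q : ℚ,
      condExpKernel μ m ω (R ⁻¹' Set.Iic (p : ℝ) ∩ Y ⁻¹' Set.Iic (q : ℝ))
        = condExpKernel μ m ω (R ⁻¹' Set.Iic (p : ℝ))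
          * condExpKernel μ m ω (Y ⁻¹' Set.Iic (q : ℝ)) :=
    ae_all_iff.2 fun p => ae_all_iff.2 fun q => h' p q
  refine ae_of_ae_trim hm ?_
  filter_upwards [h2] with ω hω
  have hsets : IndepSets {s | ∃ t ∈ (⋃ a : ℚ, {Set.Iic (a : ℝ)}), R ⁻¹' t = s}
      {s | ∃ t ∈ (⋃ a : ℚ, {Set.Iic (a : ℝ)}), Y ⁻¹' t = s} (condExpKernel μ m ω) := by
    rintro t1 t2 ⟨s1, hs1, rfl⟩ ⟨s2, hs2, rfl⟩
    simp only [Set.mem_iUnion, Set.mem_singleton_iff] at hs1 hs2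
    obtain ⟨p, rfl⟩ := hs1
    obtain ⟨q, rfl⟩ := hs2
    exact Filter.Eventually.of_forall fun _ => hω p q
  have hgen : (inferInstance : MeasurableSpace ℝ)
      = MeasurableSpace.generateFrom (⋃ a : ℚ, {Set.Iic (a : ℝ)}) := by
    rw [← Real.borel_eq_generateFrom_Iic_rat]
    exact BorelSpace.measurable_eq
  have himg : ∀ Z : Ω → ℝ, {s | ∃ t ∈ (⋃ a : ℚ, {Set.Iic (a : ℝ)}), Z ⁻¹' t = s}
      = Set.preimage Z '' (⋃ a : ℚ, {Set.Iic (a : ℝ)}) := fun Z => rfl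
  have hcomap : ∀ Z : Ω → ℝ, MeasurableSpace.comap Z (inferInstance : MeasurableSpace ℝ)
      = MeasurableSpace.generateFrom {s | ∃ t ∈ (⋃ a : ℚ, {Set.Iic (a : ℝ)}), Z ⁻¹' t = s} := by
    intro Z
    rw [himg Z]
    conv_lhs => rw [hgen]
    exact MeasurableSpace.comap_generateFrom
  exact IndepSets.indep hR.comap_le hY.comap_le
    (Real.isPiSystem_Iic_rat.comap R) (Real.isPiSystem_Iic_rat.comap Y)
    (hcomap R) (hcomap Y) hsets

end Aux

section Aux2

variable {Ω : Type*} {m : MeasurableSpace Ω} [mΩ : MeasurableSpace Ω] [StandardBorelSpace Ω]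
  {μ : Measure Ω} [IsProbabilityMeasure μ]

lemma aux_kernel_null (hm : m ≤ mΩ) {N : Set Ω} (hN : MeasurableSet N) (hN0 : μ N = 0) :
    ∀ᵐ ω ∂(μ.trim hm), condExpKernel μ m ω N = 0 := by
  have h1 : (fun ω => (condExpKernel μ m ω N).toReal) =ᵐ[μ.trim hm] μ⟦N | m⟧ :=
    condExpKernel_ae_eq_trim_condExp hm hN
  have hind : (N.indicator (fun _ => (1:ℝ))) =ᵐ[μ] 0 := by
    have := measure_eq_zero_iff_ae_notMem.1 hN0
    filter_upwards [this] with ω hω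
    simp [Set.indicator_of_notMem hω]
  have h2 : μ⟦N | m⟧ =ᵐ[μ] 0 := by
    refine (condExp_congr_ae hind).trans ?_
    rw [condExp_zero]
  have h2' : μ⟦N | m⟧ =ᵐ[μ.trim hm] 0 :=
    (StronglyMeasurable.ae_eq_trim_iff hm stronglyMeasurable_condExp stronglyMeasurable_zero).2 h2
  filter_upwards [h1.trans h2'] with ω hω
  have hne : condExpKernel μ m ω N ≠ ⊤ := measure_ne_top _ _
  simpa [ENNReal.toReal_eq_zero_iff, hne] using hω

lemma aux_condexp_mul (hm : m ≤ mΩ) {R Y : Ω → ℝ}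
    (hR : Measurable R) (hRb : ∀ ω, ‖R ω‖ ≤ 1) (hY : Integrable Y μ)
    (h : CondIndepFun m hm R Y μ) :
    μ[fun ω => R ω * Y ω | m] =ᵐ[μ] fun ω => (μ[R | m]) ω * (μ[Y | m]) ω := by
  obtain ⟨Y', hY'sm, hYY'⟩ := hY.1
  have hY'meas : Measurable Y' := hY'sm.measurable
  have hY'int : Integrable Y' μ := hY.congr hYY'
  obtain ⟨N, hNsub, hNmeas, hN0⟩ :=
    exists_measurable_superset_of_null (ae_iff.1 hYY')
  have hker0 := aux_kernel_null hm hNmeas hN0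
  have haeYY' : ∀ᵐ ω ∂(μ.trim hm), Y =ᵐ[condExpKernel μ m ω] Y' := by
    filter_upwards [hker0] with ω hω
    exact measure_mono_null hNsub hω
  have h' : ProbabilityTheory.Kernel.IndepFun R Y' (condExpKernel μ m) (μ.trim hm) :=
    ProbabilityTheory.Kernel.IndepFun.congr' h
      (Filter.Eventually.of_forall fun a => Filter.EventuallyEq.refl _ _) haeYY'
  have hae : ∀ᵐ ω ∂μ, IndepFun R Y' (condExpKernel μ m ω) :=
    aux_ae_indepFun hm hR hY'meas h'
  have hRint : Integrable R μ :=
    (integrable_const (1:ℝ)).mono' hR.aestronglyMeasurable (Filter.Eventually.of_forall hRb)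
  have hRY'int : Integrable (fun ω => R ω * Y' ω) μ := hY'int.bdd_mul hR.aestronglyMeasurable (Filter.Eventually.of_forall hRb)
  have hRYint : Integrable (fun ω => R ω * Y ω) μ := hY.bdd_mul hR.aestronglyMeasurable (Filter.Eventually.of_forall hRb)
  have e0 : μ[fun ω => R ω * Y ω | m] =ᵐ[μ] μ[fun ω => R ω * Y' ω | m] :=
    condExp_congr_ae (by filter_upwards [hYY'] with ω hω; rw [hω])
  have e1 : μ[fun ω => R ω * Y' ω | m]
      =ᵐ[μ] fun ω => ∫ y, R y * Y' y ∂(condExpKernel μ m ω) :=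
    condExp_ae_eq_integral_condExpKernel hm hRY'int
  have e2 : (fun ω => ∫ y, R y * Y' y ∂(condExpKernel μ m ω))
      =ᵐ[μ] fun ω => (∫ y, R y ∂(condExpKernel μ m ω)) * ∫ y, Y' y ∂(condExpKernel μ m ω) := by
    filter_upwards [hae] with ω hω
    exact hω.integral_fun_mul_eq_mul_integral hR.aestronglyMeasurable hY'meas.aestronglyMeasurable
  have e3 : (fun ω => (∫ y, R y ∂(condExpKernel μ m ω)) * ∫ y, Y' y ∂(condExpKernel μ m ω))
      =ᵐ[μ] fun ω => (μ[R | m]) ω * (μ[Y' | m]) ω := by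
    filter_upwards [condExp_ae_eq_integral_condExpKernel hm hRint,
      condExp_ae_eq_integral_condExpKernel hm hY'int] with ω h1 h2
    rw [h1, h2]
  have e4 : (fun ω => (μ[R | m]) ω * (μ[Y' | m]) ω)
      =ᵐ[μ] fun ω => (μ[R | m]) ω * (μ[Y | m]) ω := by
    filter_upwards [condExp_congr_ae (m := m) hYY'.symm] with ω hω
    rw [hω]
  exact ((e0.trans e1).trans e2).trans (e3.symm.symm.trans e4)
end Aux2
section Aux3

variable {Ω : Type*} {m : MeasurableSpace Ω} [mΩ : MeasurableSpace Ω]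
  {μ : Measure Ω} [IsProbabilityMeasure μ]

lemma aux_integral_mul_condexp (hm : m ≤ mΩ) {f g : Ω → ℝ}
    (hf : StronglyMeasurable[m] f) (hfg : Integrable (fun ω => f ω * g ω) μ)
    (hg : Integrable g μ) :
    ∫ ω, f ω * g ω ∂μ = ∫ ω, f ω * (μ[g | m]) ω ∂μ := by
  rw [← integral_condExp hm (f := fun ω => f ω * g ω)]
  exact integral_congr_ae (condExp_mul_of_stronglyMeasurable_left hf hfg hg)

end Aux3

/-- The conditional bias of the doubly robust influence function is a product of nuisance
errors: for fixed measurable `π̂` (with `ε ≤ π̂ ≤ 1`, `ε > 0`) and `μ̂`,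
`E[R(Y − μ̂(X,W))/π̂(X,W) + μ̂(X,W) − μ(X,W)]
  = E[(π(X,W) − π̂(X,W))(μ(X,W) − μ̂(X,W))/π̂(X,W)]`. -/
theorem stmt4 {Ω 𝒳 𝒲 : Type*} (m : MeasurableSpace Ω) [mΩ : MeasurableSpace Ω] [StandardBorelSpace Ω]
    [MeasurableSpace 𝒳] [MeasurableSpace 𝒲]
    (μ : Measure Ω) [IsProbabilityMeasure μ]
    (X : Ω → 𝒳) (W : Ω → 𝒲) (R Y : Ω → ℝ)
    (hm_def : m = MeasurableSpace.comap (fun ω => (X ω, W ω)) inferInstance)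
    (hm : m ≤ mΩ)
    (hR01 : ∀ ω, R ω = 0 ∨ R ω = 1)
    (hRmeas : Measurable R)
    (hMAR : CondIndepFun m hm R Y μ)
    (pi mu : 𝒳 × 𝒲 → ℝ)
    (hpi : (fun ω => pi (X ω, W ω)) =ᵐ[μ] μ[R | m])
    (hpipos : ∀ᵐ ω ∂μ, 0 < pi (X ω, W ω))
    (hmu : (fun ω => mu (X ω, W ω)) =ᵐ[μ] μ[Y | m])
    (pihat muhat : 𝒳 × 𝒲 → ℝ)
    (hpihat_meas : Measurable pihat) (hmuhat_meas : Measurable muhat)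
    (ε : ℝ) (hε : 0 < ε)
    (hpihat_lb : ∀ x, ε ≤ pihat x) (hpihat_ub : ∀ x, pihat x ≤ 1)
    (hY2 : MemLp Y 2 μ)
    (hmuhat2 : MemLp (fun ω => muhat (X ω, W ω)) 2 μ) :
    ∫ ω, (R ω * (Y ω - muhat (X ω, W ω)) / pihat (X ω, W ω)
        + muhat (X ω, W ω) - mu (X ω, W ω)) ∂μ
      = ∫ ω, (pi (X ω, W ω) - pihat (X ω, W ω))
          * (mu (X ω, W ω) - muhat (X ω, W ω)) / pihat (X ω, W ω) ∂μ := by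
  letI : MeasurableSpace Ω := mΩ
  have hRm : Measurable[mΩ] R := hRmeas
  have hGm : Measurable[m] (fun ω => (X ω, W ω)) :=
    measurable_iff_comap_le.2 (le_of_eq hm_def.symm)
  have hG : Measurable[mΩ] (fun ω => (X ω, W ω)) :=
    measurable_iff_comap_le.2 (le_trans (le_of_eq hm_def.symm) hm)
  -- abbreviations
  set ph : Ω → ℝ := fun ω => pihat (X ω, W ω) with hph_def
  set iv : Ω → ℝ := fun ω => (pihat (X ω, W ω))⁻¹ with hiv_def
  set mh : Ω → ℝ := fun ω => muhat (X ω, W ω) with hmh_def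
  set pf : Ω → ℝ := fun ω => pi (X ω, W ω) with hpf_def
  set mf : Ω → ℝ := fun ω => mu (X ω, W ω) with hmf_def
  have hph_pos : ∀ ω, 0 < ph ω := fun ω => lt_of_lt_of_le hε (hpihat_lb _)
  have hiv_m : StronglyMeasurable[m] iv := ((hpihat_meas.comp hGm).inv).stronglyMeasurable
  have hiv_meas : Measurable iv := (hpihat_meas.comp hG).inv
  have hiv_bdd : ∀ ω, ‖iv ω‖ ≤ ε⁻¹ := by
    intro ω
    rw [Real.norm_eq_abs, abs_of_pos (inv_pos.2 (hph_pos ω))]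
    exact inv_anti₀ hε (hpihat_lb _)
  have hRb : ∀ ω, ‖R ω‖ ≤ 1 := fun ω => by rcases hR01 ω with h | h <;> simp [h]
  have hR0 : ∀ ω, (0:ℝ) ≤ R ω := fun ω => by rcases hR01 ω with h | h <;> simp [h]
  have hR1 : ∀ ω, R ω ≤ 1 := fun ω => by rcases hR01 ω with h | h <;> simp [h]
  have hYint : Integrable Y μ := hY2.integrable one_le_two
  have hmhint : Integrable mh μ := hmuhat2.integrable one_le_two
  have hmh_m : StronglyMeasurable[m] mh := (hmuhat_meas.comp hGm).stronglyMeasurable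
  have hmh_meas : Measurable mh := hmuhat_meas.comp hG
  have hRint : Integrable R μ :=
    (integrable_const (μ := μ) (1:ℝ)).mono' hRm.aestronglyMeasurable (Filter.Eventually.of_forall hRb)
  have hRYint : Integrable (fun ω => R ω * Y ω) μ :=
    hYint.bdd_mul hRm.aestronglyMeasurable (Filter.Eventually.of_forall hRb)
  have hmfint : Integrable mf μ := integrable_condExp.congr hmu.symm
  have hprod := aux_condexp_mul hm hRm hRb hYint hMAR
  -- bounds on the conditional expectation of R
  have hcond0 : 0 ≤ᵐ[μ] μ[R | m] := condExp_nonneg (Filter.Eventually.of_forall hR0)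
  have hcond1 : μ[R | m] ≤ᵐ[μ] fun _ => (1:ℝ) := by
    have h1 := condExp_mono (m := m) hRint (integrable_const (μ := μ) (1:ℝ))
      (Filter.Eventually.of_forall hR1)
    rwa [condExp_const hm] at h1
  have hpf01 : ∀ᵐ ω ∂μ, 0 ≤ pf ω ∧ pf ω ≤ 1 := by
    filter_upwards [hpi, hcond0, hcond1] with ω h1 h2 h3
    rw [h1]; exact ⟨h2, h3⟩
  have hpf_aesm : AEStronglyMeasurable pf μ :=
    ((stronglyMeasurable_condExp.mono hm).aestronglyMeasurable).congr hpi.symm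
  have hmf_aesm : AEStronglyMeasurable mf μ :=
    ((stronglyMeasurable_condExp.mono hm).aestronglyMeasurable).congr hmu.symm
  -- integrability of the pieces
  have t1int : Integrable (fun ω => iv ω * (R ω * Y ω)) μ :=
    hRYint.bdd_mul hiv_meas.aestronglyMeasurable (Filter.Eventually.of_forall hiv_bdd)
  have t2int : Integrable (fun ω => (iv ω * mh ω) * R ω) μ := by
    have h := hmhint.bdd_mul ((hiv_meas.mul hRm).aestronglyMeasurable)
      (c := ε⁻¹) (Filter.Eventually.of_forall fun ω => by
        rw [Pi.mul_apply, norm_mul]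
        have h2 := mul_le_mul (hiv_bdd ω) (hRb ω) (norm_nonneg _) (le_of_lt (inv_pos.2 hε))
        simpa using h2)
    exact h.congr (Filter.Eventually.of_forall fun ω => by simp only [Pi.mul_apply]; ring)
  have u1int : Integrable (fun ω => iv ω * (pf ω * mf ω)) μ := by
    refine Integrable.mono' (g := fun ω => ε⁻¹ * |mf ω|) ((hmfint.abs).const_mul ε⁻¹)
      (hiv_meas.aestronglyMeasurable.mul (hpf_aesm.mul hmf_aesm)) ?_
    filter_upwards [hpf01] with ω hω
    rw [norm_mul, norm_mul]
    calc ‖iv ω‖ * (‖pf ω‖ * ‖mf ω‖) ≤ ε⁻¹ * (1 * ‖mf ω‖) := by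
          refine mul_le_mul (hiv_bdd ω) ?_ (by positivity) (le_of_lt (inv_pos.2 hε))
          refine mul_le_mul_of_nonneg_right ?_ (norm_nonneg _)
          rw [Real.norm_eq_abs, abs_of_nonneg hω.1]; exact hω.2
      _ = ε⁻¹ * |mf ω| := by rw [one_mul, Real.norm_eq_abs]
  have u2int : Integrable (fun ω => (iv ω * mh ω) * pf ω) μ := by
    refine Integrable.mono' (g := fun ω => ε⁻¹ * |mh ω|) ((hmhint.abs).const_mul ε⁻¹)
      (((hiv_meas.mul hmh_meas).aestronglyMeasurable).mul hpf_aesm) ?_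
    filter_upwards [hpf01] with ω hω
    rw [norm_mul, norm_mul]
    calc ‖iv ω‖ * ‖mh ω‖ * ‖pf ω‖ ≤ ε⁻¹ * ‖mh ω‖ * 1 := by
          refine mul_le_mul (mul_le_mul_of_nonneg_right (hiv_bdd ω) (norm_nonneg _)) ?_
            (norm_nonneg _) (by positivity)
          rw [Real.norm_eq_abs, abs_of_nonneg hω.1]; exact hω.2
      _ = ε⁻¹ * |mh ω| := by rw [mul_one, Real.norm_eq_abs]
  -- rewrite the left-hand side
  have hsplit : (fun ω => R ω * (Y ω - mh ω) / ph ω + mh ω - mf ω)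
      = fun ω => (iv ω * (R ω * Y ω) - (iv ω * mh ω) * R ω) + (mh ω - mf ω) := by
    funext ω
    rw [div_eq_mul_inv]
    show R ω * (Y ω - mh ω) * iv ω + mh ω - mf ω = _
    ring
  have key1 : ∫ ω, iv ω * (R ω * Y ω) ∂μ = ∫ ω, iv ω * (pf ω * mf ω) ∂μ := by
    rw [aux_integral_mul_condexp hm hiv_m t1int hRYint]
    refine integral_congr_ae ?_
    filter_upwards [hprod, hpi, hmu] with ω h1 h2 h3
    rw [h1, ← h2, ← h3]
  have key2 : ∫ ω, (iv ω * mh ω) * R ω ∂μ = ∫ ω, (iv ω * mh ω) * pf ω ∂μ := by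
    have haux : StronglyMeasurable[m] (fun ω => iv ω * mh ω) := hiv_m.mul hmh_m
    rw [aux_integral_mul_condexp hm (f := fun ω => iv ω * mh ω) (g := R) haux t2int hRint]
    refine integral_congr_ae ?_
    filter_upwards [hpi] with ω h2
    rw [← h2]
  have hre : (fun ω => (pf ω - ph ω) * (mf ω - mh ω) / ph ω)
      =ᵐ[μ] fun ω => (iv ω * (pf ω * mf ω) - (iv ω * mh ω) * pf ω) + (mh ω - mf ω) := by
    refine Filter.Eventually.of_forall fun ω => ?_
    have h0 : ph ω ≠ 0 := ne_of_gt (hph_pos ω)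
    show (pf ω - ph ω) * (mf ω - mh ω) / ph ω
      = ((ph ω)⁻¹ * (pf ω * mf ω) - ((ph ω)⁻¹ * mh ω) * pf ω) + (mh ω - mf ω)
    field_simp
    ring
  calc ∫ ω, (R ω * (Y ω - mh ω) / ph ω + mh ω - mf ω) ∂μ
      = ∫ ω, ((iv ω * (R ω * Y ω) - (iv ω * mh ω) * R ω) + (mh ω - mf ω)) ∂μ := by
        rw [hsplit]
    _ = (∫ ω, iv ω * (R ω * Y ω) ∂μ - ∫ ω, (iv ω * mh ω) * R ω ∂μ)
        + (∫ ω, mh ω ∂μ - ∫ ω, mf ω ∂μ) := by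
        have hs1 : Integrable (fun ω => iv ω * (R ω * Y ω) - (iv ω * mh ω) * R ω) μ :=
          t1int.sub t2int
        have hs2 : Integrable (fun ω => mh ω - mf ω) μ := hmhint.sub hmfint
        rw [integral_add hs1 hs2, integral_sub t1int t2int, integral_sub hmhint hmfint]
    _ = (∫ ω, iv ω * (pf ω * mf ω) ∂μ - ∫ ω, (iv ω * mh ω) * pf ω ∂μ)
        + (∫ ω, mh ω ∂μ - ∫ ω, mf ω ∂μ) := by rw [key1, key2]
    _ = ∫ ω, ((iv ω * (pf ω * mf ω) - (iv ω * mh ω) * pf ω) + (mh ω - mf ω)) ∂μ := by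
        have hs1 : Integrable (fun ω => iv ω * (pf ω * mf ω) - (iv ω * mh ω) * pf ω) μ :=
          u1int.sub u2int
        have hs2 : Integrable (fun ω => mh ω - mf ω) μ := hmhint.sub hmfint
        rw [integral_add hs1 hs2, integral_sub u1int u2int, integral_sub hmhint hmfint]
    _ = ∫ ω, (pf ω - ph ω) * (mf ω - mh ω) / ph ω ∂μ := (integral_congr_ae hre).symm
end

section
/- Double robustness: under the setting of the previous result, if either π̂ = π almost surely or μ̂ = μ almost surely, then E[ R(Y − μ̂(X,W))/π̂(X,W) + μ̂(X,W) ] = E[Y]. -/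
open MeasureTheory ProbabilityTheory Set

/-- Product rule for conditional expectation under conditional independence, for a bounded
measurable factor and an integrable factor. -/
lemma condexp_mul_of_condIndepFun' {Ω : Type*} [mΩ : MeasurableSpace Ω] [StandardBorelSpace Ω]
    {μ : Measure Ω} [IsProbabilityMeasure μ] {m : MeasurableSpace Ω} (hm : m ≤ mΩ)
    {R Y : Ω → ℝ} (hR : Measurable[mΩ] R) (hRbdd : ∀ ω, ‖R ω‖ ≤ 1)
    (hYint : Integrable Y μ) (hMAR : CondIndepFun m hm R Y μ) :
    μ[fun ω => R ω * Y ω|m] =ᵐ[μ] fun ω => (μ[R|m]) ω * (μ[Y|m]) ω := by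
  letI : MeasurableSpace Ω := mΩ
  set κ := condExpKernel (mΩ := mΩ) μ m with hκdef
  obtain ⟨Y', hY'sm, hYY'⟩ : ∃ Y', StronglyMeasurable[mΩ] Y' ∧ Y =ᵐ[μ] Y' :=
    ⟨hYint.1.mk Y, hYint.1.stronglyMeasurable_mk, hYint.1.ae_eq_mk⟩
  have hY'meas : Measurable[mΩ] Y' := hY'sm.measurable
  set N := toMeasurable μ {ω | Y ω ≠ Y' ω} with hNdef
  have hNmeas : MeasurableSet[mΩ] N := measurableSet_toMeasurable μ _
  have hNnull : μ N = 0 := by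
    rw [hNdef, measure_toMeasurable]
    exact ae_iff.mp hYY'
  -- a.e. (w.r.t. the trimmed measure), the conditional kernel gives measure zero to `N`
  have hκN : ∀ᵐ ω ∂(μ.trim hm), κ ω N = 0 := by
    have h1 : (fun ω => (κ ω N).toReal) =ᵐ[μ] μ⟦N|m⟧ := condExpKernel_ae_eq_condExp hm hNmeas
    have h2 : μ⟦N|m⟧ =ᵐ[μ] 0 := by
      have h3 : (N.indicator (fun _ => (1:ℝ))) =ᵐ[μ] 0 := by
        refine ae_iff.mpr (measure_mono_null ?_ hNnull)
        intro x hx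
        by_contra hxN
        exact hx (by simp [Set.indicator_of_notMem hxN])
      exact (condExp_congr_ae h3).trans (by simp [condExp_zero])
    have h4 : ∀ᵐ ω ∂μ, κ ω N = 0 := by
      filter_upwards [h1, h2] with ω hω1 hω2
      simp only [Pi.zero_apply] at hω2
      have h5 := hω1.trans hω2
      rwa [ENNReal.toReal_eq_zero_iff, or_iff_left (measure_ne_top _ _)] at h5
    have hmeasm : Measurable[m] fun ω => κ ω N := measurable_condExpKernel hNmeas
    have hset : MeasurableSet[m] {ω | ¬ κ ω N = 0} :=
      (hmeasm (measurableSet_singleton 0)).compl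
    refine ae_iff.mpr ?_
    rw [trim_measurableSet_eq hm hset]
    exact ae_iff.mp h4
  have hYY'κ : ∀ᵐ ω ∂(μ.trim hm), Y =ᵐ[κ ω] Y' := by
    filter_upwards [hκN] with ω hω
    refine ae_iff.mpr (measure_mono_null ?_ hω)
    exact fun x hx => subset_toMeasurable μ _ hx
  have hMAR' : CondIndepFun m hm R Y' μ :=
    Kernel.IndepFun.congr' hMAR
      (Filter.Eventually.of_forall fun ω => Filter.EventuallyEq.rfl) hYY'κ
  have hpair : ∀ᵐ ω ∂(μ.trim hm), ∀ q r : ℚ,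
      κ ω (R ⁻¹' Iic (q:ℝ) ∩ Y' ⁻¹' Iic (r:ℝ)) =
        κ ω (R ⁻¹' Iic (q:ℝ)) * κ ω (Y' ⁻¹' Iic (r:ℝ)) := by
    rw [ae_all_iff]; intro q; rw [ae_all_iff]; intro r
    exact hMAR' _ _ ⟨Iic (q:ℝ), measurableSet_Iic, rfl⟩ ⟨Iic (r:ℝ), measurableSet_Iic, rfl⟩
  have hindep : ∀ᵐ ω ∂μ, IndepFun R Y' (κ ω) := by
    refine ae_of_ae_trim hm ?_
    filter_upwards [hpair] with ω hω
    have hreal : (inferInstance : MeasurableSpace ℝ) = borel ℝ := BorelSpace.measurable_eq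
    have hgen : (inferInstance : MeasurableSpace ℝ)
        = MeasurableSpace.generateFrom (⋃ q : ℚ, {Iic (q:ℝ)}) := by
      rw [hreal, Real.borel_eq_generateFrom_Iic_rat]
    have hcomapR : MeasurableSpace.comap R (inferInstance : MeasurableSpace ℝ) =
        MeasurableSpace.generateFrom (Set.preimage R '' (⋃ q : ℚ, {Iic (q:ℝ)})) := by
      conv_lhs => rw [hgen]
      rw [MeasurableSpace.comap_generateFrom]
    have hcomapY : MeasurableSpace.comap Y' (inferInstance : MeasurableSpace ℝ) =
        MeasurableSpace.generateFrom (Set.preimage Y' '' (⋃ q : ℚ, {Iic (q:ℝ)})) := by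
      conv_lhs => rw [hgen]
      rw [MeasurableSpace.comap_generateFrom]
    have hsets : IndepSets (Set.preimage R '' (⋃ q : ℚ, {Iic (q:ℝ)}))
        (Set.preimage Y' '' (⋃ q : ℚ, {Iic (q:ℝ)})) (κ ω) := by
      rintro _ _ ⟨s1, hs1, rfl⟩ ⟨s2, hs2, rfl⟩
      simp only [Set.mem_iUnion, Set.mem_singleton_iff] at hs1 hs2
      obtain ⟨q, rfl⟩ := hs1
      obtain ⟨r, rfl⟩ := hs2
      refine Filter.Eventually.of_forall fun a => ?_
      simpa [Kernel.const_apply] using hω q r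
    have hIndep : Indep (MeasurableSpace.comap R inferInstance)
        (MeasurableSpace.comap Y' inferInstance) (κ ω) :=
      IndepSets.indep hR.comap_le hY'meas.comap_le
        (Real.isPiSystem_Iic_rat.comap R) (Real.isPiSystem_Iic_rat.comap Y')
        hcomapR hcomapY hsets
    exact hIndep
  have hRint : Integrable R μ := by
    have := (integrable_const (μ := μ) (1:ℝ)).bdd_mul (hR.aestronglyMeasurable (μ := μ)) (Filter.Eventually.of_forall hRbdd)
    simpa using this
  have hY'int : Integrable Y' μ := hYint.congr hYY'
  have hRY' : Integrable (fun ω => R ω * Y' ω) μ :=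
    hY'int.bdd_mul (hR.aestronglyMeasurable (μ := μ)) (Filter.Eventually.of_forall hRbdd)
  have h₁ : μ[fun ω => R ω * Y ω|m] =ᵐ[μ] μ[fun ω => R ω * Y' ω|m] :=
    condExp_congr_ae (hYY'.mono fun ω h => by dsimp only; rw [h])
  have h₂ : μ[fun ω => R ω * Y' ω|m] =ᵐ[μ] fun ω => ∫ y, R y * Y' y ∂(κ ω) :=
    condExp_ae_eq_integral_condExpKernel hm hRY'
  have h₃ : (fun ω => ∫ y, R y * Y' y ∂(κ ω))
      =ᵐ[μ] fun ω => (∫ y, R y ∂(κ ω)) * ∫ y, Y' y ∂(κ ω) := by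
    filter_upwards [hindep] with ω hω
    exact hω.integral_fun_mul_eq_mul_integral (hR.aestronglyMeasurable (μ := κ ω)) (hY'meas.aestronglyMeasurable (μ := κ ω))
  have h₄ : (fun ω => (∫ y, R y ∂(κ ω)) * ∫ y, Y' y ∂(κ ω)) =ᵐ[μ]
      fun ω => (μ[R|m]) ω * (μ[Y|m]) ω := by
    have hr := condExp_ae_eq_integral_condExpKernel (f := R) hm hRint
    have hy := condExp_ae_eq_integral_condExpKernel (f := Y') hm hY'int
    have hyY : μ[Y'|m] =ᵐ[μ] μ[Y|m] := condExp_congr_ae hYY'.symm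
    filter_upwards [hr, hy, hyY] with ω hr1 hy1 hy2
    rw [← hr1, ← hy1, hy2]
  exact ((h₁.trans h₂).trans h₃).trans h₄

/-- Double robustness: under missing at random, if either `π̂ = π` a.e. or `μ̂ = μ` a.e.,
then `E[R(Y − μ̂(X,W))/π̂(X,W) + μ̂(X,W)] = E[Y]`. -/
theorem stmt5 {Ω 𝒳 𝒲 : Type*} (m : MeasurableSpace Ω) [mΩ : MeasurableSpace Ω] [StandardBorelSpace Ω]
    [MeasurableSpace 𝒳] [MeasurableSpace 𝒲]
    (μ : Measure Ω) [IsProbabilityMeasure μ]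
    (X : Ω → 𝒳) (W : Ω → 𝒲) (R Y : Ω → ℝ)
    (hm_def : m = MeasurableSpace.comap (fun ω => (X ω, W ω)) inferInstance)
    (hm : m ≤ mΩ)
    (hR01 : ∀ ω, R ω = 0 ∨ R ω = 1)
    (hRmeas : Measurable R)
    (hMAR : CondIndepFun m hm R Y μ)
    (pi mu : 𝒳 × 𝒲 → ℝ)
    (hpi : (fun ω => pi (X ω, W ω)) =ᵐ[μ] μ[R | m])
    (hmu : (fun ω => mu (X ω, W ω)) =ᵐ[μ] μ[Y | m])
    (ε : ℝ) (hε : 0 < ε)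
    (hpipos : ∀ᵐ ω ∂μ, ε ≤ pi (X ω, W ω))
    (pihat muhat : 𝒳 × 𝒲 → ℝ)
    (hpihat_meas : Measurable pihat) (hmuhat_meas : Measurable muhat)
    (hpihat_lb : ∀ x, ε ≤ pihat x)
    (hY2 : MemLp Y 2 μ)
    (hmuhat2 : MemLp (fun ω => muhat (X ω, W ω)) 2 μ)
    (hInt : Integrable (fun ω =>
      R ω * (Y ω - muhat (X ω, W ω)) / pihat (X ω, W ω) + muhat (X ω, W ω)) μ)
    (hDR : ((fun ω => pihat (X ω, W ω)) =ᵐ[μ] fun ω => pi (X ω, W ω)) ∨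
           ((fun ω => muhat (X ω, W ω)) =ᵐ[μ] fun ω => mu (X ω, W ω))) :
    ∫ ω, (R ω * (Y ω - muhat (X ω, W ω)) / pihat (X ω, W ω) + muhat (X ω, W ω)) ∂μ
      = ∫ ω, Y ω ∂μ := by
  letI : MeasurableSpace Ω := mΩ
  have hRm : Measurable[mΩ] R := hRmeas
  -- notation
  set f : Ω → ℝ := fun ω => muhat (X ω, W ω) with hfdef
  set p : Ω → ℝ := fun ω => pihat (X ω, W ω) with hpdef
  set k : Ω → ℝ := fun ω => (p ω)⁻¹ with hkdef
  have hppos : ∀ x, (0:ℝ) < pihat x := fun x => lt_of_lt_of_le hε (hpihat_lb x)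
  -- measurability
  have hTm : Measurable[m] fun ω => (X ω, W ω) := by
    rw [hm_def]; exact Measurable.of_comap_le le_rfl
  have hf_sm : StronglyMeasurable[m] f := (hmuhat_meas.comp hTm).stronglyMeasurable
  have hk_sm : StronglyMeasurable[m] k := ((hpihat_meas.inv).comp hTm).stronglyMeasurable
  -- bounds
  have hR_bdd : ∀ ω, ‖R ω‖ ≤ 1 := by
    intro ω; rcases hR01 ω with h | h <;> simp [h]
  have hk_bdd : ∀ ω, ‖k ω‖ ≤ ε⁻¹ := by
    intro ω
    have h1 : (0:ℝ) < p ω := hppos _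
    rw [Real.norm_eq_abs, abs_of_pos (inv_pos.2 h1)]
    exact inv_anti₀ hε (hpihat_lb _)
  -- integrability
  have hfInt : Integrable f μ := hmuhat2.integrable one_le_two
  have hYInt : Integrable Y μ := hY2.integrable one_le_two
  have hRInt : Integrable R μ := by
    have := (integrable_const (μ := μ) (1:ℝ)).bdd_mul (hRm.aestronglyMeasurable (μ := μ)) (Filter.Eventually.of_forall hR_bdd)
    simpa using this
  have hRfInt : Integrable (fun ω => R ω * f ω) μ :=
    hfInt.bdd_mul (hRm.aestronglyMeasurable (μ := μ)) (Filter.Eventually.of_forall hR_bdd)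
  have hRYInt : Integrable (fun ω => R ω * Y ω) μ :=
    hYInt.bdd_mul (hRm.aestronglyMeasurable (μ := μ)) (Filter.Eventually.of_forall hR_bdd)
  have hG0 : Integrable (fun ω => R ω * (Y ω - f ω)) μ :=
    (hRYInt.sub hRfInt).congr (Filter.Eventually.of_forall fun ω => (mul_sub _ _ _).symm)
  have hkASM : AEStronglyMeasurable k μ := ((hk_sm.mono hm).aestronglyMeasurable (μ := μ))
  have hkG0 : Integrable (fun ω => k ω * (R ω * (Y ω - f ω))) μ :=
    hG0.bdd_mul hkASM (Filter.Eventually.of_forall hk_bdd)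
  -- rewrite the integrand
  have hrw : (fun ω => R ω * (Y ω - muhat (X ω, W ω)) / pihat (X ω, W ω) + muhat (X ω, W ω))
      = fun ω => k ω * (R ω * (Y ω - f ω)) + f ω := by
    funext ω
    simp only [hkdef, hpdef, hfdef, div_eq_mul_inv]
    ring
  -- the conditional expectation computation
  have hmul : μ[fun ω => R ω * Y ω|m] =ᵐ[μ] fun ω => (μ[R|m]) ω * (μ[Y|m]) ω :=
    condexp_mul_of_condIndepFun' hm hRm hR_bdd hYInt hMAR
  have hfRInt : Integrable (f * R) μ :=
    hRfInt.congr (Filter.Eventually.of_forall fun ω => mul_comm _ _)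
  have hRf_ce : μ[f * R|m] =ᵐ[μ] f * μ[R|m] :=
    condExp_mul_of_stronglyMeasurable_left hf_sm hfRInt hRInt
  have hG0_ce : μ[fun ω => R ω * (Y ω - f ω)|m]
      =ᵐ[μ] fun ω => (μ[R|m]) ω * (μ[Y|m]) ω - f ω * (μ[R|m]) ω := by
    have e1 : μ[fun ω => R ω * (Y ω - f ω)|m]
        =ᵐ[μ] μ[(fun ω => R ω * Y ω) - fun ω => R ω * f ω|m] := by
      refine condExp_congr_ae (Filter.Eventually.of_forall fun ω => ?_)
      simp [mul_sub]
    have e2 := condExp_sub (μ := μ) (m := m) hRYInt hRfInt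
    have e3 : μ[fun ω => R ω * f ω|m] =ᵐ[μ] fun ω => f ω * (μ[R|m]) ω := by
      have : μ[fun ω => R ω * f ω|m] =ᵐ[μ] μ[f * R|m] :=
        condExp_congr_ae (Filter.Eventually.of_forall fun ω => mul_comm _ _)
      exact this.trans hRf_ce
    filter_upwards [e1, e2, hmul, e3] with ω h1 h2 h3 h4
    rw [h1, h2]
    simp only [Pi.sub_apply]
    rw [h3, h4]
  have hkG0' : Integrable (k * fun ω => R ω * (Y ω - f ω)) μ :=
    hkG0.congr (Filter.Eventually.of_forall fun ω => rfl)
  have hk_pull : μ[k * fun ω => R ω * (Y ω - f ω)|m]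
      =ᵐ[μ] k * μ[fun ω => R ω * (Y ω - f ω)|m] :=
    condExp_mul_of_stronglyMeasurable_left hk_sm hkG0' hG0
  have hkey : μ[fun ω => k ω * (R ω * (Y ω - f ω))|m]
      =ᵐ[μ] fun ω => k ω * ((μ[R|m]) ω * (μ[Y|m]) ω - f ω * (μ[R|m]) ω) := by
    filter_upwards [hk_pull, hG0_ce] with ω h1 h2
    have : (μ[fun ω => k ω * (R ω * (Y ω - f ω))|m]) ω
        = (μ[k * fun ω => R ω * (Y ω - f ω)|m]) ω := rfl
    rw [this, h1, Pi.mul_apply, h2]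
  -- split the integral
  rw [hrw, integral_add hkG0 hfInt]
  have hint_kG0 : ∫ ω, k ω * (R ω * (Y ω - f ω)) ∂μ
      = ∫ ω, (μ[fun ω => k ω * (R ω * (Y ω - f ω))|m]) ω ∂μ :=
    (integral_condExp hm).symm
  rcases hDR with hDRl | hDRr
  · -- π̂ = π a.e.
    have hp_eq : p =ᵐ[μ] μ[R|m] := hDRl.trans hpi
    have hF_eq : (fun ω => k ω * ((μ[R|m]) ω * (μ[Y|m]) ω - f ω * (μ[R|m]) ω))
        =ᵐ[μ] fun ω => (μ[Y|m]) ω - f ω := by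
      filter_upwards [hp_eq] with ω h
      have hpne : p ω ≠ 0 := ne_of_gt (hppos _)
      rw [← h]
      field_simp [hkdef]
      rw [show k ω * p ω = 1 from inv_mul_cancel₀ hpne]
      ring
    have h5 : ∫ ω, k ω * (R ω * (Y ω - f ω)) ∂μ = ∫ ω, ((μ[Y|m]) ω - f ω) ∂μ := by
      rw [hint_kG0]
      exact integral_congr_ae (hkey.trans hF_eq)
    rw [h5, integral_sub integrable_condExp hfInt, integral_condExp (μ := μ) hm (f := Y)]
    ring
  · -- μ̂ = μ a.e.
    have hf_eq : f =ᵐ[μ] μ[Y|m] := hDRr.trans hmu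
    have hF_eq : (fun ω => k ω * ((μ[R|m]) ω * (μ[Y|m]) ω - f ω * (μ[R|m]) ω))
        =ᵐ[μ] fun _ => (0:ℝ) := by
      filter_upwards [hf_eq] with ω h
      rw [h]; ring
    have h5 : ∫ ω, k ω * (R ω * (Y ω - f ω)) ∂μ = 0 := by
      rw [hint_kG0, integral_congr_ae (hkey.trans hF_eq)]
      simp
    have h6 : ∫ ω, f ω ∂μ = ∫ ω, Y ω ∂μ := by
      rw [integral_congr_ae hf_eq, integral_condExp (μ := μ) hm (f := Y)]
    rw [h5, h6, zero_add]
end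

section
/- Sufficient summary reduction of the bias: under sequential MAR with a sufficient summary S_{gt} (π_{gt}(X_g,H_{gt}) = π(X_g,S_{gt}) and μ_{gt}(X_g,H_{gt}) = μ(X_g,S_{gt}), with S_{gt} measurable w.r.t. σ(X_g,H_{gt})), for fixed functions π̂ ≥ ε > 0 and μ̂, the expected bias of the DR influence function at time t equals E[ (π(X_g,S_{gt}) − π̂(X_g,S_{gt}))(μ(X_g,S_{gt}) − μ̂(X_g,S_{gt})) / π̂(X_g,S_{gt}) ], i.e. E[ R_{gt}(Y_{gt} − μ̂(X_g,S_{gt}))/π̂(X_g,S_{gt}) + μ̂(X_g,S_{gt}) − μ(X_g,S_{gt}) ] equals that product expression. -/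
open MeasureTheory ProbabilityTheory

open Filter Set


lemma integral_mul_condexp_right {Ω : Type*} {m : MeasurableSpace Ω} [mΩ : MeasurableSpace Ω]
    (μ : Measure Ω) [IsFiniteMeasure μ] (hm : m ≤ mΩ)
    {f g : Ω → ℝ} (hf : StronglyMeasurable[m] f)
    (hfg : Integrable (f * g) μ) (hg : Integrable g μ) :
    ∫ ω, f ω * g ω ∂μ = ∫ ω, f ω * (μ[g|m]) ω ∂μ := by
  haveI : SigmaFinite (μ.trim hm) := inferInstance
  have h2 : μ[f * g|m] =ᵐ[μ] f * μ[g|m] := condExp_mul_of_stronglyMeasurable_left hf hfg hg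
  calc ∫ ω, f ω * g ω ∂μ = ∫ ω, (f * g) ω ∂μ := rfl
    _ = ∫ ω, (μ[f * g|m]) ω ∂μ := (integral_condExp hm).symm
    _ = ∫ ω, (f * μ[g|m]) ω ∂μ := integral_congr_ae h2
    _ = ∫ ω, f ω * (μ[g|m]) ω ∂μ := rfl

lemma key_indep {Ω : Type*} {m : MeasurableSpace Ω} [mΩ : MeasurableSpace Ω]
    [StandardBorelSpace Ω]
    (μ : Measure Ω) [IsProbabilityMeasure μ] (hm : m ≤ mΩ)
    {R Y : Ω → ℝ} (hR01 : ∀ ω, R ω = 0 ∨ R ω = 1) (hRmeas : Measurable[mΩ] R)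
    (hYmeas : Measurable[mΩ] Y) (hYint : Integrable Y μ)
    (hMAR : CondIndepFun m hm R Y μ)
    {w : Ω → ℝ} (hw : StronglyMeasurable[m] w)
    {C : ℝ} (hC : 0 ≤ C) (hwb : ∀ ω, |w ω| ≤ C) :
    ∫ ω, R ω * w ω * Y ω ∂μ = ∫ ω, (μ[R|m]) ω * w ω * Y ω ∂μ := by
  have hwae : AEStronglyMeasurable w μ := (hw.mono hm).aestronglyMeasurable
  have hR1 : ∀ ω, |R ω| ≤ 1 := by
    intro ω; rcases hR01 ω with h | h <;> simp [h]
  have hRint : Integrable R μ := by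
    refine Integrable.mono' (integrable_const 1) hRmeas.aestronglyMeasurable ?_
    exact Eventually.of_forall fun ω => by simpa [Real.norm_eq_abs] using hR1 ω
  have hPsm : StronglyMeasurable[m] (μ[R|m]) := stronglyMeasurable_condExp
  have hPae : AEStronglyMeasurable (μ[R|m]) μ := (hPsm.mono hm).aestronglyMeasurable
  have hPint : Integrable (μ[R|m]) μ := integrable_condExp
  have hP0 : 0 ≤ᵐ[μ] μ[R|m] :=
    condExp_nonneg (Eventually.of_forall fun ω => by rcases hR01 ω with h | h <;> simp [h])
  have hP1 : ∀ᵐ ω ∂μ, |(μ[R|m]) ω| ≤ 1 := by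
    have hle : μ[R|m] ≤ᵐ[μ] μ[(fun _ => (1:ℝ))|m] :=
      condExp_mono hRint (integrable_const 1)
        (Eventually.of_forall fun ω => by rcases hR01 ω with h | h <;> simp [h])
    have hc : μ[(fun _ : Ω => (1:ℝ))|m] = fun _ => (1:ℝ) := condExp_const hm 1
    rw [hc] at hle
    filter_upwards [hP0, hle] with ω h0 h1
    simp only [Pi.zero_apply] at h0
    rw [abs_le]; exact ⟨by linarith, h1⟩
  -- integrability helper
  have hIble : ∀ (V Z g : Ω → ℝ), AEStronglyMeasurable V μ → (∀ᵐ ω ∂μ, |V ω| ≤ 1) →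
      AEStronglyMeasurable Z μ → Integrable g μ → (∀ᵐ ω ∂μ, |Z ω| ≤ g ω) →
      Integrable (fun ω => V ω * w ω * Z ω) μ := by
    intro V Z g hV hV1 hZ hg hZg
    refine Integrable.mono' (hg.const_mul C) ((hV.mul hwae).mul hZ) ?_
    filter_upwards [hV1, hZg] with ω h1 h2
    have h3 := hwb ω
    have h4 : (0:ℝ) ≤ g ω := le_trans (abs_nonneg _) h2
    calc ‖V ω * w ω * Z ω‖ = |V ω| * |w ω| * |Z ω| := by
          rw [Real.norm_eq_abs, abs_mul, abs_mul]
      _ ≤ 1 * C * g ω := by gcongr <;> simp [abs_nonneg]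
      _ = C * g ω := by ring
  -- Step A
  have stepA : ∀ t : Set ℝ, MeasurableSet t →
      ∫ ω, R ω * w ω * (Y ⁻¹' t).indicator (fun _ => (1:ℝ)) ω ∂μ
        = ∫ ω, (μ[R|m]) ω * w ω * (Y ⁻¹' t).indicator (fun _ => (1:ℝ)) ω ∂μ := by
    intro t ht
    set A : Set Ω := R ⁻¹' {1} with hA
    have hAmeas : MeasurableSet[mΩ] A := hRmeas (measurableSet_singleton 1)
    set B : Set Ω := Y ⁻¹' t with hB
    have hBmeas : MeasurableSet[mΩ] B := hYmeas ht
    have hRA : R = A.indicator (fun _ => (1:ℝ)) := by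
      funext ω
      rcases hR01 ω with h | h
      · have hω : ω ∉ A := by simp [hA, Set.mem_preimage, h]
        simp [Set.indicator_apply, hω, h]
      · have hω : ω ∈ A := by simp [hA, Set.mem_preimage, h]
        simp [Set.indicator_apply, hω, h]
    have hfact := (condIndepFun_iff_condExp_inter_preimage_eq_mul (μ := μ) (hm' := hm)
      hRmeas hYmeas).mp hMAR {1} t (measurableSet_singleton 1) ht
    have hindB : ∀ ω, |B.indicator (fun _ => (1:ℝ)) ω| ≤ 1 := by
      intro ω; by_cases h : ω ∈ B <;> simp [Set.indicator_apply, h]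
    have hindAB : ∀ ω, |(A ∩ B).indicator (fun _ => (1:ℝ)) ω| ≤ 1 := by
      intro ω; by_cases h : ω ∈ A ∩ B <;> simp [Set.indicator_apply, h]
    have hABint : Integrable ((A ∩ B).indicator (fun _ => (1:ℝ))) μ :=
      (integrable_const 1).indicator (hAmeas.inter hBmeas)
    have hBint : Integrable (B.indicator (fun _ => (1:ℝ))) μ :=
      (integrable_const 1).indicator hBmeas
    have hwABint : Integrable (w * (A ∩ B).indicator (fun _ => (1:ℝ))) μ := by
      refine Integrable.mono' (integrable_const C) (hwae.mul hABint.1) ?_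
      refine Eventually.of_forall fun ω => ?_
      simp only [Pi.mul_apply, Real.norm_eq_abs, abs_mul]
      calc |w ω| * |(A ∩ B).indicator (fun _ => (1:ℝ)) ω| ≤ C * 1 :=
            mul_le_mul (hwb ω) (hindAB ω) (abs_nonneg _) hC
        _ = C := mul_one C
    have hPA : μ[R|m] = μ⟦A|m⟧ := by rw [hRA]
    have hPwsm : StronglyMeasurable[m] (μ[R|m] * w) := hPsm.mul hw
    have hPwBint : Integrable ((μ[R|m] * w) * B.indicator (fun _ => (1:ℝ))) μ := by
      refine Integrable.mono' (hPint.norm.const_mul C) ((hPae.mul hwae).mul hBint.1) ?_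
      refine Eventually.of_forall fun ω => ?_
      simp only [Pi.mul_apply, Real.norm_eq_abs, abs_mul]
      calc |(μ[R|m]) ω| * |w ω| * |B.indicator (fun _ => (1:ℝ)) ω|
          ≤ |(μ[R|m]) ω| * C * 1 := by
            refine mul_le_mul (mul_le_mul le_rfl (hwb ω) (abs_nonneg _) (abs_nonneg _))
              (hindB ω) (abs_nonneg _) (by positivity)
        _ = C * ‖(μ[R|m]) ω‖ := by rw [Real.norm_eq_abs]; ring
    calc ∫ ω, R ω * w ω * B.indicator (fun _ => (1:ℝ)) ω ∂μ
        = ∫ ω, w ω * (A ∩ B).indicator (fun _ => (1:ℝ)) ω ∂μ := by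
          refine integral_congr_ae (Eventually.of_forall fun ω => ?_)
          rcases hR01 ω with h | h
          · have hω : ω ∉ A := by simp [hA, Set.mem_preimage, h]
            have hω' : ω ∉ A ∩ B := fun hc => hω hc.1
            simp [h, Set.indicator_apply, hω']
          · have hω : ω ∈ A := by simp [hA, Set.mem_preimage, h]
            by_cases hb : ω ∈ B
            · have hab : ω ∈ A ∩ B := ⟨hω, hb⟩
              simp [h, Set.indicator_apply, hb, hab]
            · have hab : ω ∉ A ∩ B := fun hc => hb hc.2
              simp [h, Set.indicator_apply, hb, hab]
      _ = ∫ ω, w ω * (μ⟦A ∩ B|m⟧) ω ∂μ := integral_mul_condexp_right μ hm hw hwABint hABint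
      _ = ∫ ω, ((μ[R|m]) ω * w ω) * (μ⟦B|m⟧) ω ∂μ := by
          refine integral_congr_ae ?_
          filter_upwards [hfact] with ω hω
          rw [hPA]
          calc w ω * (μ⟦A ∩ B|m⟧) ω = w ω * ((μ⟦A|m⟧) ω * (μ⟦B|m⟧) ω) := by rw [hω]
            _ = ((μ⟦A|m⟧) ω * w ω) * (μ⟦B|m⟧) ω := by ring
      _ = ∫ ω, ((μ[R|m]) * w) ω * (B.indicator (fun _ => (1:ℝ))) ω ∂μ :=
          (integral_mul_condexp_right μ hm hPwsm hPwBint hBint).symm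
      _ = ∫ ω, (μ[R|m]) ω * w ω * B.indicator (fun _ => (1:ℝ)) ω ∂μ := rfl
  -- Step B
  have stepB : ∀ φ : SimpleFunc ℝ ℝ,
      ∫ ω, R ω * w ω * φ (Y ω) ∂μ = ∫ ω, (μ[R|m]) ω * w ω * φ (Y ω) ∂μ := by
    intro φ
    induction φ using MeasureTheory.SimpleFunc.induction with
    | const c hs =>
      rename_i s
      have e : ∀ ω, (SimpleFunc.piecewise s hs (SimpleFunc.const ℝ c)
          (SimpleFunc.const ℝ 0)) (Y ω) = c * (Y ⁻¹' s).indicator (fun _ => (1:ℝ)) ω := by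
        intro ω
        by_cases h : Y ω ∈ s <;>
          simp [SimpleFunc.piecewise_apply, Set.indicator_apply, Set.mem_preimage, h]
      calc ∫ ω, R ω * w ω * (SimpleFunc.piecewise s hs (SimpleFunc.const ℝ c)
              (SimpleFunc.const ℝ 0)) (Y ω) ∂μ
          = ∫ ω, c * (R ω * w ω * (Y ⁻¹' s).indicator (fun _ => (1:ℝ)) ω) ∂μ :=
            integral_congr_ae (Eventually.of_forall fun ω => by simp only [e]; ring)
        _ = c * ∫ ω, R ω * w ω * (Y ⁻¹' s).indicator (fun _ => (1:ℝ)) ω ∂μ :=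
            integral_const_mul c _
        _ = c * ∫ ω, (μ[R|m]) ω * w ω * (Y ⁻¹' s).indicator (fun _ => (1:ℝ)) ω ∂μ := by
            rw [stepA s hs]
        _ = ∫ ω, c * ((μ[R|m]) ω * w ω * (Y ⁻¹' s).indicator (fun _ => (1:ℝ)) ω) ∂μ :=
            (integral_const_mul c _).symm
        _ = ∫ ω, (μ[R|m]) ω * w ω * (SimpleFunc.piecewise s hs (SimpleFunc.const ℝ c)
              (SimpleFunc.const ℝ 0)) (Y ω) ∂μ :=
            integral_congr_ae (Eventually.of_forall fun ω => by simp only [e]; ring)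
    | add hdisj hf hg =>
      rename_i f g
      obtain ⟨Mf, hMf⟩ := f.exists_forall_norm_le
      obtain ⟨Mg, hMg⟩ := g.exists_forall_norm_le
      have hfY : AEStronglyMeasurable (fun ω => f (Y ω)) μ :=
        (f.measurable.comp hYmeas).aestronglyMeasurable
      have hgY : AEStronglyMeasurable (fun ω => g (Y ω)) μ :=
        (g.measurable.comp hYmeas).aestronglyMeasurable
      have hRf := hIble R (fun ω => f (Y ω)) (fun _ => Mf) hRmeas.aestronglyMeasurable
        (Eventually.of_forall hR1) hfY (integrable_const Mf)
        (Eventually.of_forall fun ω => by simpa [Real.norm_eq_abs] using hMf (Y ω))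
      have hRg := hIble R (fun ω => g (Y ω)) (fun _ => Mg) hRmeas.aestronglyMeasurable
        (Eventually.of_forall hR1) hgY (integrable_const Mg)
        (Eventually.of_forall fun ω => by simpa [Real.norm_eq_abs] using hMg (Y ω))
      have hPf := hIble (μ[R|m]) (fun ω => f (Y ω)) (fun _ => Mf) hPae hP1 hfY
        (integrable_const Mf)
        (Eventually.of_forall fun ω => by simpa [Real.norm_eq_abs] using hMf (Y ω))
      have hPg := hIble (μ[R|m]) (fun ω => g (Y ω)) (fun _ => Mg) hPae hP1 hgY
        (integrable_const Mg)
        (Eventually.of_forall fun ω => by simpa [Real.norm_eq_abs] using hMg (Y ω))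
      calc ∫ ω, R ω * w ω * (f + g) (Y ω) ∂μ
          = ∫ ω, (R ω * w ω * f (Y ω) + R ω * w ω * g (Y ω)) ∂μ := by
            refine integral_congr_ae (Eventually.of_forall fun ω => ?_)
            simp only [SimpleFunc.coe_add, Pi.add_apply]; ring
        _ = (∫ ω, R ω * w ω * f (Y ω) ∂μ) + ∫ ω, R ω * w ω * g (Y ω) ∂μ :=
            integral_add hRf hRg
        _ = (∫ ω, (μ[R|m]) ω * w ω * f (Y ω) ∂μ) + ∫ ω, (μ[R|m]) ω * w ω * g (Y ω) ∂μ := by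
            rw [hf, hg]
        _ = ∫ ω, ((μ[R|m]) ω * w ω * f (Y ω) + (μ[R|m]) ω * w ω * g (Y ω)) ∂μ :=
            (integral_add hPf hPg).symm
        _ = ∫ ω, (μ[R|m]) ω * w ω * (f + g) (Y ω) ∂μ := by
            refine integral_congr_ae (Eventually.of_forall fun ω => ?_)
            simp only [SimpleFunc.coe_add, Pi.add_apply]; ring
  -- Step C : approximation
  set φ : ℕ → SimpleFunc ℝ ℝ :=
    fun n => SimpleFunc.approxOn id measurable_id Set.univ 0 (Set.mem_univ 0) n with hφdef
  have htend : ∀ ω, Tendsto (fun n => (φ n) (Y ω)) atTop (nhds (Y ω)) := by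
    intro ω
    have h := SimpleFunc.tendsto_approxOn (f := (id : ℝ → ℝ)) measurable_id
      (Set.mem_univ 0) (x := Y ω) (by simp)
    simpa using h
  have hbnd : ∀ n ω, |(φ n) (Y ω)| ≤ 2 * |Y ω| := by
    intro n ω
    have h := SimpleFunc.norm_approxOn_zero_le (f := (id : ℝ → ℝ)) measurable_id
      (Set.mem_univ 0) (Y ω) n
    simp only [Real.norm_eq_abs, id_eq] at h
    calc |(φ n) (Y ω)| ≤ |Y ω| + |Y ω| := h
      _ = 2 * |Y ω| := by ring
  have hbound_int : Integrable (fun ω => C * (2 * |Y ω|)) μ :=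
    (hYint.abs.const_mul 2).const_mul C
  have hT1 : Tendsto (fun n => ∫ ω, R ω * w ω * (φ n) (Y ω) ∂μ) atTop
      (nhds (∫ ω, R ω * w ω * Y ω ∂μ)) := by
    refine tendsto_integral_of_dominated_convergence (fun ω => C * (2 * |Y ω|))
      (fun n => (hRmeas.aestronglyMeasurable.mul hwae).mul
        ((φ n).measurable.comp hYmeas).aestronglyMeasurable)
      hbound_int (fun n => Eventually.of_forall fun ω => ?_)
      (Eventually.of_forall fun ω => ?_)
    · calc ‖R ω * w ω * (φ n) (Y ω)‖ = |R ω| * |w ω| * |(φ n) (Y ω)| := by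
            rw [Real.norm_eq_abs, abs_mul, abs_mul]
        _ ≤ 1 * C * (2 * |Y ω|) := by
            refine mul_le_mul (mul_le_mul (hR1 ω) (hwb ω) (abs_nonneg _) (by norm_num))
              (hbnd n ω) (abs_nonneg _) (by positivity)
        _ = C * (2 * |Y ω|) := by ring
    · exact (htend ω).const_mul (R ω * w ω)
  have hT2 : Tendsto (fun n => ∫ ω, (μ[R|m]) ω * w ω * (φ n) (Y ω) ∂μ) atTop
      (nhds (∫ ω, (μ[R|m]) ω * w ω * Y ω ∂μ)) := by
    refine tendsto_integral_of_dominated_convergence (fun ω => C * (2 * |Y ω|))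
      (fun n => (hPae.mul hwae).mul ((φ n).measurable.comp hYmeas).aestronglyMeasurable)
      hbound_int (fun n => ?_) (Eventually.of_forall fun ω => ?_)
    · filter_upwards [hP1] with ω h1
      calc ‖(μ[R|m]) ω * w ω * (φ n) (Y ω)‖ = |(μ[R|m]) ω| * |w ω| * |(φ n) (Y ω)| := by
            rw [Real.norm_eq_abs, abs_mul, abs_mul]
        _ ≤ 1 * C * (2 * |Y ω|) := by
            refine mul_le_mul (mul_le_mul h1 (hwb ω) (abs_nonneg _) (by norm_num))
              (hbnd n ω) (abs_nonneg _) (by positivity)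
        _ = C * (2 * |Y ω|) := by ring
    · exact (htend ω).const_mul ((μ[R|m]) ω * w ω)
  have heq : (fun n => ∫ ω, R ω * w ω * (φ n) (Y ω) ∂μ)
      = fun n => ∫ ω, (μ[R|m]) ω * w ω * (φ n) (Y ω) ∂μ :=
    funext fun n => stepB (φ n)
  rw [heq] at hT1
  exact tendsto_nhds_unique hT1 hT2

/-- Sufficient summary reduction of the bias: under sequential MAR with a sufficient summary
`S` (so that `π_t(X,H_t) = π(X,S)` and `μ_t(X,H_t) = μ(X,S)` with `S` measurable with respect
to `σ(X,H_t)`), for fixed `π̂ ≥ ε > 0` and `μ̂`,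
`E[R(Y − μ̂(X,S))/π̂(X,S) + μ̂(X,S) − μ(X,S)]
  = E[(π(X,S) − π̂(X,S))(μ(X,S) − μ̂(X,S))/π̂(X,S)]`. -/
theorem stmt17 {Ω 𝒳 ℋ 𝒮 : Type*} (m : MeasurableSpace Ω) [mΩ : MeasurableSpace Ω] [StandardBorelSpace Ω]
    [MeasurableSpace 𝒳] [MeasurableSpace ℋ] [MeasurableSpace 𝒮]
    (μ : Measure Ω) [IsProbabilityMeasure μ]
    (X : Ω → 𝒳) (H : Ω → ℋ) (R Y : Ω → ℝ) (S : Ω → 𝒮)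
    (hm_def : m = MeasurableSpace.comap (fun ω => (X ω, H ω)) inferInstance)
    (hm : m ≤ mΩ)
    (hS : @Measurable Ω 𝒮 m _ S)
    (hR01 : ∀ ω, R ω = 0 ∨ R ω = 1)
    (hRmeas : Measurable R)
    (hMAR : CondIndepFun m hm R Y μ)
    (pi mu : 𝒳 × 𝒮 → ℝ)
    (hpi : (fun ω => pi (X ω, S ω)) =ᵐ[μ] μ[R | m])
    (hpipos : ∀ᵐ ω ∂μ, 0 < pi (X ω, S ω))
    (hmu : (fun ω => mu (X ω, S ω)) =ᵐ[μ] μ[Y | m])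
    (pihat muhat : 𝒳 × 𝒮 → ℝ)
    (hpihat_meas : Measurable pihat) (hmuhat_meas : Measurable muhat)
    (ε : ℝ) (hε : 0 < ε) (hpihat_lb : ∀ x, ε ≤ pihat x)
    (hY2 : MemLp Y 2 μ)
    (hmuhat2 : MemLp (fun ω => muhat (X ω, S ω)) 2 μ) :
    ∫ ω, (R ω * (Y ω - muhat (X ω, S ω)) / pihat (X ω, S ω)
        + muhat (X ω, S ω) - mu (X ω, S ω)) ∂μ
      = ∫ ω, (pi (X ω, S ω) - pihat (X ω, S ω))
          * (mu (X ω, S ω) - muhat (X ω, S ω)) / pihat (X ω, S ω) ∂μ := by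
  -- m-measurability of the summary maps
  have hXHm : Measurable[m] (fun ω => (X ω, H ω)) := by
    rw [hm_def]; exact measurable_iff_comap_le.mpr le_rfl
  have hXm : Measurable[m] X := measurable_fst.comp hXHm
  have hXSm : Measurable[m] (fun ω => (X ω, S ω)) := hXm.prodMk hS
  set pc : Ω → ℝ := fun ω => pi (X ω, S ω) with hpcdef
  set mc : Ω → ℝ := fun ω => mu (X ω, S ω) with hmcdef
  set ph : Ω → ℝ := fun ω => pihat (X ω, S ω) with hphdef
  set mh : Ω → ℝ := fun ω => muhat (X ω, S ω) with hmhdef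
  have hphm : Measurable[m] ph := hpihat_meas.comp hXSm
  have hmhm : StronglyMeasurable[m] mh := (hmuhat_meas.comp hXSm).stronglyMeasurable
  set w : Ω → ℝ := fun ω => (ph ω)⁻¹ with hwdef
  have hwm : StronglyMeasurable[m] w := hphm.inv.stronglyMeasurable
  have hwae : AEStronglyMeasurable[mΩ] w μ := (hwm.mono hm).aestronglyMeasurable
  have hphpos : ∀ ω, 0 < ph ω := fun ω => lt_of_lt_of_le hε (hpihat_lb _)
  have hwb : ∀ ω, |w ω| ≤ ε⁻¹ := by
    intro ω
    rw [abs_of_pos (inv_pos.mpr (hphpos ω))]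
    exact inv_anti₀ hε (hpihat_lb _)
  -- measurable modification of Y
  have hYasm : AEStronglyMeasurable[mΩ] Y μ := hY2.aestronglyMeasurable
  set Y' : Ω → ℝ := hYasm.mk Y with hY'def
  have hY'sm : StronglyMeasurable[mΩ] Y' := hYasm.stronglyMeasurable_mk
  have hYY' : Y =ᵐ[μ] Y' := hYasm.ae_eq_mk
  have hY'meas : Measurable[mΩ] Y' := hY'sm.measurable
  have hYint : Integrable Y μ := hY2.integrable one_le_two
  have hY'int : Integrable Y' μ := hYint.congr hYY'
  have hmhint : Integrable mh μ := hmuhat2.integrable one_le_two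
  -- transfer conditional independence to Y'
  have hnull : μ {ω | ¬ Y ω = Y' ω} = 0 := ae_iff.mp hYY'
  obtain ⟨N, hNsub, hNmeas, hNnull⟩ :
      ∃ N, {ω | ¬ Y ω = Y' ω} ⊆ N ∧ MeasurableSet[mΩ] N ∧ μ N = 0 :=
    ⟨@toMeasurable Ω mΩ μ _, @subset_toMeasurable Ω mΩ μ _, @measurableSet_toMeasurable Ω mΩ μ _,
      by rw [@measure_toMeasurable Ω mΩ μ _]; exact hnull⟩
  have hindN : (N.indicator (fun _ => (1:ℝ))) =ᵐ[μ] 0 := by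
    have hN0 : ∀ᵐ ω ∂μ, ω ∉ N := by
      rw [ae_iff]; simpa using hNnull
    filter_upwards [hN0] with ω h
    simp [Set.indicator_apply, h]
  have hcondN : (μ⟦N|m⟧) =ᵐ[μ] 0 := by
    refine (condExp_congr_ae hindN).trans ?_
    rw [condExp_zero]
  have htrim : ∀ᵐ a ∂(μ.trim hm), condExpKernel (mΩ := mΩ) μ m a N = 0 := by
    have h1 := condExpKernel_ae_eq_trim_condExp (mΩ := mΩ) (μ := μ) hm hNmeas
    have h2 : (μ⟦N|m⟧) =ᵐ[μ.trim hm] 0 :=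
      (StronglyMeasurable.ae_eq_trim_iff hm stronglyMeasurable_condExp
        (stronglyMeasurable_const : StronglyMeasurable[m] (0 : Ω → ℝ))).mpr hcondN
    filter_upwards [h1, h2] with a ha hb
    have h3 : (condExpKernel (mΩ := mΩ) μ m a N).toReal = 0 := by
      rw [← measureReal_def, ha]; simpa using hb
    exact ((ENNReal.toReal_eq_zero_iff _).mp h3).resolve_right (measure_ne_top _ _)
  have hMAR' : CondIndepFun m hm R Y' μ := by
    refine Kernel.IndepFun.congr' hMAR (Eventually.of_forall fun a => EventuallyEq.rfl) ?_
    filter_upwards [htrim] with a ha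
    rw [Filter.EventuallyEq, ae_iff]
    exact measure_mono_null (fun ω hω => hNsub hω) ha
  -- basic facts about R and its conditional expectation
  have hRmeasΩ : Measurable[mΩ] R := hRmeas
  have hRaesm : AEStronglyMeasurable[mΩ] R μ := hRmeasΩ.aestronglyMeasurable
  have hR1 : ∀ ω, |R ω| ≤ 1 := by
    intro ω; rcases hR01 ω with h | h <;> simp [h]
  have hRint : Integrable R μ := by
    refine Integrable.mono' (integrable_const 1) hRaesm ?_
    exact Eventually.of_forall fun ω => by simpa [Real.norm_eq_abs] using hR1 ω
  have hPsm : StronglyMeasurable[m] (μ[R|m]) := stronglyMeasurable_condExp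
  have hPae : AEStronglyMeasurable[mΩ] (μ[R|m]) μ := (hPsm.mono hm).aestronglyMeasurable
  have hP0 : 0 ≤ᵐ[μ] μ[R|m] :=
    condExp_nonneg (Eventually.of_forall fun ω => by rcases hR01 ω with h | h <;> simp [h])
  have hP1 : ∀ᵐ ω ∂μ, |(μ[R|m]) ω| ≤ 1 := by
    have hle : μ[R|m] ≤ᵐ[μ] μ[(fun _ => (1:ℝ))|m] :=
      condExp_mono hRint (integrable_const 1)
        (Eventually.of_forall fun ω => by rcases hR01 ω with h | h <;> simp [h])
    have hc : μ[(fun _ : Ω => (1:ℝ))|m] = fun _ => (1:ℝ) := condExp_const hm 1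
    rw [hc] at hle
    filter_upwards [hP0, hle] with ω h0 h1
    simp only [Pi.zero_apply] at h0
    rw [abs_le]; exact ⟨by linarith, h1⟩
  -- facts about pc and mc
  have hpcae : AEStronglyMeasurable[mΩ] pc μ := hPae.congr hpi.symm
  have hmcae : AEStronglyMeasurable[mΩ] mc μ :=
    ((stronglyMeasurable_condExp (m := m)).mono hm).aestronglyMeasurable.congr hmu.symm
  have hmcint : Integrable mc μ := integrable_condExp.congr hmu.symm
  have hpc1 : ∀ᵐ ω ∂μ, |pc ω| ≤ 1 := by
    filter_upwards [hpi, hP1] with ω h1 h2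
    rw [h1]; exact h2
  -- integrability helper
  have hIble : ∀ (V Z : Ω → ℝ), AEStronglyMeasurable[mΩ] V μ → (∀ᵐ ω ∂μ, |V ω| ≤ 1) →
      AEStronglyMeasurable[mΩ] Z μ → Integrable Z μ →
      Integrable (fun ω => V ω * w ω * Z ω) μ := by
    intro V Z hV hV1 hZ hZint
    refine Integrable.mono' (hZint.abs.const_mul ε⁻¹) ((hV.mul hwae).mul hZ) ?_
    filter_upwards [hV1] with ω h1
    calc ‖V ω * w ω * Z ω‖ = |V ω| * |w ω| * |Z ω| := by
          rw [Real.norm_eq_abs, abs_mul, abs_mul]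
      _ ≤ 1 * ε⁻¹ * |Z ω| := by
          refine mul_le_mul (mul_le_mul h1 (hwb ω) (abs_nonneg _) (by norm_num))
            le_rfl (abs_nonneg _) (mul_nonneg zero_le_one (inv_nonneg.mpr hε.le))
      _ = ε⁻¹ * |Z ω| := by ring
  have hf1 := hIble R Y hRaesm (Eventually.of_forall hR1) hYasm hYint
  have hf2 := hIble R mh hRaesm (Eventually.of_forall hR1) hmhint.1 hmhint
  have hg1 := hIble pc mc hpcae hpc1 hmcae hmcint
  have hg2 := hIble pc mh hpcae hpc1 hmhint.1 hmhint
  -- decomposition of the left-hand side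
  have hLHS : ∫ ω, (R ω * (Y ω - mh ω) / ph ω + mh ω - mc ω) ∂μ
      = (∫ ω, R ω * w ω * Y ω ∂μ) - (∫ ω, R ω * w ω * mh ω ∂μ)
        + (∫ ω, mh ω ∂μ) - ∫ ω, mc ω ∂μ := by
    have hE1 : Integrable (fun ω => R ω * w ω * Y ω - R ω * w ω * mh ω) μ := hf1.sub hf2
    have hE2 : Integrable (fun ω => R ω * w ω * Y ω - R ω * w ω * mh ω + mh ω) μ :=
      hE1.add hmhint
    calc ∫ ω, (R ω * (Y ω - mh ω) / ph ω + mh ω - mc ω) ∂μ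
        = ∫ ω, (R ω * w ω * Y ω - R ω * w ω * mh ω + mh ω - mc ω) ∂μ := by
          refine integral_congr_ae (Eventually.of_forall fun ω => ?_)
          simp only [hwdef]
          rw [div_eq_mul_inv]; ring
      _ = (∫ ω, (R ω * w ω * Y ω - R ω * w ω * mh ω + mh ω) ∂μ) - ∫ ω, mc ω ∂μ :=
          integral_sub hE2 hmcint
      _ = ((∫ ω, (R ω * w ω * Y ω - R ω * w ω * mh ω) ∂μ) + ∫ ω, mh ω ∂μ)
            - ∫ ω, mc ω ∂μ := by rw [integral_add hE1 hmhint]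
      _ = (∫ ω, R ω * w ω * Y ω ∂μ) - (∫ ω, R ω * w ω * mh ω ∂μ)
            + (∫ ω, mh ω ∂μ) - ∫ ω, mc ω ∂μ := by rw [integral_sub hf1 hf2]
  -- decomposition of the right-hand side
  have hRHS : ∫ ω, (pc ω - ph ω) * (mc ω - mh ω) / ph ω ∂μ
      = (∫ ω, pc ω * w ω * mc ω ∂μ) - (∫ ω, pc ω * w ω * mh ω ∂μ)
        + (∫ ω, mh ω ∂μ) - ∫ ω, mc ω ∂μ := by
    have hE1 : Integrable (fun ω => pc ω * w ω * mc ω - pc ω * w ω * mh ω) μ := hg1.sub hg2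
    have hE2 : Integrable (fun ω => pc ω * w ω * mc ω - pc ω * w ω * mh ω + mh ω) μ :=
      hE1.add hmhint
    calc ∫ ω, (pc ω - ph ω) * (mc ω - mh ω) / ph ω ∂μ
        = ∫ ω, (pc ω * w ω * mc ω - pc ω * w ω * mh ω + mh ω - mc ω) ∂μ := by
          refine integral_congr_ae (Eventually.of_forall fun ω => ?_)
          simp only [hwdef]
          have h0 : ph ω ≠ 0 := ne_of_gt (hphpos ω)
          field_simp
          ring
      _ = (∫ ω, (pc ω * w ω * mc ω - pc ω * w ω * mh ω + mh ω) ∂μ) - ∫ ω, mc ω ∂μ :=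
          integral_sub hE2 hmcint
      _ = ((∫ ω, (pc ω * w ω * mc ω - pc ω * w ω * mh ω) ∂μ) + ∫ ω, mh ω ∂μ)
            - ∫ ω, mc ω ∂μ := by rw [integral_add hE1 hmhint]
      _ = (∫ ω, pc ω * w ω * mc ω ∂μ) - (∫ ω, pc ω * w ω * mh ω ∂μ)
            + (∫ ω, mh ω ∂μ) - ∫ ω, mc ω ∂μ := by rw [integral_sub hg1 hg2]
  -- the two middle identities
  have hI1 : ∫ ω, R ω * w ω * Y ω ∂μ = ∫ ω, pc ω * w ω * mc ω ∂μ := by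
    have hPwY'int : Integrable ((μ[R|m] * w) * Y') μ :=
      hIble (μ[R|m]) Y' hPae hP1 hY'sm.aestronglyMeasurable hY'int
    calc ∫ ω, R ω * w ω * Y ω ∂μ
        = ∫ ω, R ω * w ω * Y' ω ∂μ :=
          integral_congr_ae (by filter_upwards [hYY'] with ω h; rw [h])
      _ = ∫ ω, (μ[R|m]) ω * w ω * Y' ω ∂μ :=
          key_indep (mΩ := mΩ) μ hm hR01 hRmeasΩ hY'meas hY'int hMAR' hwm
            (inv_nonneg.mpr hε.le) hwb
      _ = ∫ ω, ((μ[R|m]) * w) ω * (μ[Y'|m]) ω ∂μ :=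
          integral_mul_condexp_right (mΩ := mΩ) μ hm (stronglyMeasurable_condExp.mul hwm)
            hPwY'int hY'int
      _ = ∫ ω, pc ω * w ω * mc ω ∂μ := by
          have hcY : μ[Y'|m] =ᵐ[μ] mc := (condExp_congr_ae hYY'.symm).trans hmu.symm
          refine integral_congr_ae ?_
          filter_upwards [hpi, hcY] with ω h1 h2
          simp only [Pi.mul_apply]
          rw [h2, ← h1]
  have hI2 : ∫ ω, R ω * w ω * mh ω ∂μ = ∫ ω, pc ω * w ω * mh ω ∂μ := by
    have hwmhRint : Integrable ((w * mh) * R) μ := by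
      refine Integrable.mono' (hmhint.abs.const_mul ε⁻¹) ((hwae.mul hmhint.1).mul hRaesm) ?_
      refine Eventually.of_forall fun ω => ?_
      simp only [Pi.mul_apply, Real.norm_eq_abs, abs_mul]
      calc |w ω| * |mh ω| * |R ω| ≤ (ε⁻¹ * |mh ω|) * 1 := by
            refine mul_le_mul (mul_le_mul (hwb ω) le_rfl (abs_nonneg _)
              (inv_nonneg.mpr hε.le)) (hR1 ω) (abs_nonneg _)
              (mul_nonneg (inv_nonneg.mpr hε.le) (abs_nonneg _))
        _ = ε⁻¹ * |mh ω| := by ring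
    calc ∫ ω, R ω * w ω * mh ω ∂μ
        = ∫ ω, (w * mh) ω * R ω ∂μ :=
          integral_congr_ae (Eventually.of_forall fun ω => by simp only [Pi.mul_apply]; ring)
      _ = ∫ ω, (w * mh) ω * (μ[R|m]) ω ∂μ :=
          integral_mul_condexp_right (mΩ := mΩ) μ hm (hwm.mul hmhm) hwmhRint hRint
      _ = ∫ ω, pc ω * w ω * mh ω ∂μ := by
          refine integral_congr_ae ?_
          filter_upwards [hpi] with ω h1
          simp only [Pi.mul_apply]
          rw [← h1]; ring
  rw [hLHS, hRHS, hI1, hI2]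
end
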